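/- arXiv:1904.11785 — 2 statements merged into one kernel-verified Lean document; each statement's English description precedes it below -/
import Mathlib

section
/- Let K be a subfield of F and assume that η_j ∉ K for every j = 1,…,ℓ. Then the set of polynomials in P_{k,n}[t,h,η] all of whose coefficients lie in K equals span_K{ X^i : i ∈ I }, where I = {0,1,…,k−1} ∖ {h_1,…,h_ℓ}. -/
open Polynomial

/-- Evaluation vector: `ev_α(f) = (f(α₁),…,f(α_n))`. -/
noncomputable def evalVec {F : Type*} [Field F] {n : ℕ} (α : Fin n → F) (f : F[X]) :
    Fin n → F :=
  fun i => f.eval (α i)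

/-- The twisted polynomial with coefficient vector `u`:
`Σ_{i=0}^{k−1} u_i X^i + Σ_{j=1}^{ℓ} η_j u_{h_j} X^{k−1+t_j}`. -/
noncomputable def twistedPoly {F : Type*} [Field F] (k ℓ : ℕ) (t : Fin ℓ → ℕ)
    (h : Fin ℓ → Fin k) (η : Fin ℓ → F) (u : Fin k → F) : F[X] :=
  (∑ i : Fin k, Polynomial.C (u i) * Polynomial.X ^ (i : ℕ))
    + ∑ j : Fin ℓ, Polynomial.C (η j * u (h j)) * Polynomial.X ^ (k - 1 + t j)

/-- The space of twisted polynomials `P_{k,n}[t,h,η]`. -/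
def twistedPolySet (F : Type*) [Field F] (k ℓ : ℕ) (t : Fin ℓ → ℕ)
    (h : Fin ℓ → Fin k) (η : Fin ℓ → F) : Set F[X] :=
  { p | ∃ u : Fin k → F, p = twistedPoly k ℓ t h η u }

/-- The twisted Reed–Solomon code `TRS_{k,n}[α,t,h,η]`, as a subset of `F^n`. -/
def TRS {F : Type*} [Field F] {n : ℕ} (α : Fin n → F) (k ℓ : ℕ) (t : Fin ℓ → ℕ)
    (h : Fin ℓ → Fin k) (η : Fin ℓ → F) : Set (Fin n → F) :=
  { c | ∃ u : Fin k → F, c = evalVec α (twistedPoly k ℓ t h η u) }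

/-- The Reed–Solomon code `RS_{k,n}[α]`, as a subset of `F^n`. -/
def RS {F : Type*} [Field F] {n : ℕ} (α : Fin n → F) (k : ℕ) : Set (Fin n → F) :=
  { c | ∃ f : F[X], f.degree ≤ ((k - 1 : ℕ) : WithBot ℕ) ∧ c = evalVec α f }

/-!
A twisted polynomial with coefficient vector `u` has coefficient `u i` at `X ^ i` for `i < k` and
`η j * u (h j)` at `X ^ (k - 1 + t j)`, these twist exponents being distinct and at least `k`.
If all coefficients lie in `K`, then every `u i` lies in `K`, and `u (h j) ≠ 0` would force
`η j = (η j * u (h j)) * (u (h j))⁻¹ ∈ K`. So the hooked coefficients vanish, the twist disappears,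
and the polynomial is a `K`-combination of the `X ^ i` with `i ∈ I`. Conversely, such a
combination is the twisted polynomial of its own first `k` coefficients.
-/

section

variable {R : Type*} [Semiring R]

theorem coeff_sum_fin_C_mul_X_pow {k : ℕ} (u : Fin k → R) (m : ℕ) :
    (∑ i : Fin k, C (u i) * X ^ (i : ℕ)).coeff m = if hm : m < k then u ⟨m, hm⟩ else 0 := by
  simp only [finsetSum_coeff, coeff_C_mul_X_pow]
  split_ifs with hm
  · rw [Finset.sum_eq_single ⟨m, hm⟩ (fun i _ hi => if_neg fun h => hi (Fin.ext h.symm)) (by simp)]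
    simp
  · exact Finset.sum_eq_zero fun i _ => if_neg (by omega)

theorem coeff_sum_C_mul_X_pow_of_injective {ι : Type*} [Fintype ι] {e : ι → ℕ}
    (he : Function.Injective e) (c : ι → R) (j : ι) :
    (∑ i, C (c i) * X ^ e i).coeff (e j) = c j := by
  simp only [finsetSum_coeff, coeff_C_mul_X_pow]
  rw [Finset.sum_eq_single j (fun i _ hi => if_neg fun h => hi (he h.symm)) (by simp)]
  simp

theorem coeff_sum_C_mul_X_pow_of_lt {ι : Type*} [Fintype ι] {e : ι → ℕ} (c : ι → R) {m : ℕ}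
    (hm : ∀ i, m < e i) : (∑ i, C (c i) * X ^ e i).coeff m = 0 := by
  simp only [finsetSum_coeff, coeff_C_mul_X_pow]
  exact Finset.sum_eq_zero fun i _ => if_neg (hm i).ne

end

theorem mem_span_X_pow_iff {F : Type*} [Field F] (K : Subfield F) (S : Finset ℕ) (p : F[X]) :
    p ∈ Submodule.span K {q : F[X] | ∃ i ∈ S, q = X ^ i} ↔
      (∀ m, p.coeff m ∈ K) ∧ ∀ m ∉ S, p.coeff m = 0 := by
  constructor
  · intro hp
    induction hp using Submodule.span_induction with
    | mem q hq =>
      obtain ⟨i, hi, rfl⟩ := hq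
      refine ⟨fun m => ?_, fun m hm => by rw [coeff_X_pow, if_neg (by rintro rfl; exact hm hi)]⟩
      rw [coeff_X_pow]
      split_ifs
      exacts [K.one_mem, K.zero_mem]
    | zero => exact ⟨fun _ => K.zero_mem, fun _ _ => rfl⟩
    | add q r _ _ hq hr =>
      exact ⟨fun m => K.add_mem (hq.1 m) (hr.1 m), fun m hm => by simp [hq.2 m hm, hr.2 m hm]⟩
    | smul c q _ hq =>
      exact ⟨fun m => K.mul_mem c.2 (hq.1 m), fun m hm => by simp [Subfield.smul_def, hq.2 m hm]⟩
  · rintro ⟨hK, hS⟩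
    rw [p.as_sum_support_C_mul_X_pow]
    refine Submodule.sum_mem _ fun m hm => ?_
    have hmS : m ∈ S := by_contra fun h => mem_support_iff.mp hm (hS m h)
    have : C (p.coeff m) * X ^ m = (⟨p.coeff m, hK m⟩ : K) • (X ^ m : F[X]) := by
      rw [Subfield.smul_def, smul_eq_C_mul]
    rw [this]
    exact Submodule.smul_mem _ _ (Submodule.subset_span ⟨m, hmS, rfl⟩)

section Twisted

variable {F : Type*} [Field F] {k ℓ : ℕ} {t : Fin ℓ → ℕ} {h : Fin ℓ → Fin k} {η : Fin ℓ → F}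
  {u : Fin k → F}

theorem coeff_twistedPoly_of_lt (ht : ∀ j, 1 ≤ t j) {m : ℕ} (hm : m < k) :
    (twistedPoly k ℓ t h η u).coeff m = u ⟨m, hm⟩ := by
  rw [twistedPoly, coeff_add, coeff_sum_fin_C_mul_X_pow, dif_pos hm,
    coeff_sum_C_mul_X_pow_of_lt _ fun j => by have := ht j; omega, add_zero]

theorem coeff_twistedPoly_twist (ht : ∀ j, 1 ≤ t j) (htinj : Function.Injective t) (j : Fin ℓ) :
    (twistedPoly k ℓ t h η u).coeff (k - 1 + t j) = η j * u (h j) := by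
  have he : Function.Injective fun j => k - 1 + t j :=
    fun _ _ hij => htinj (Nat.add_left_cancel hij)
  rw [twistedPoly, coeff_add, coeff_sum_fin_C_mul_X_pow, dif_neg (by have := ht j; omega),
    zero_add, coeff_sum_C_mul_X_pow_of_injective he]

theorem twistedPoly_of_hooks_eq_zero (hu : ∀ j, u (h j) = 0) :
    twistedPoly k ℓ t h η u = ∑ i : Fin k, C (u i) * X ^ (i : ℕ) := by
  simp [twistedPoly, hu]

theorem twistedPoly_hook_eq_zero_of_coeff_mem (ht : ∀ j, 1 ≤ t j) (htinj : Function.Injective t)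
    {K : Subfield F} (hK : ∀ m, (twistedPoly k ℓ t h η u).coeff m ∈ K) {j : Fin ℓ}
    (hηK : η j ∉ K) : u (h j) = 0 := by
  by_contra hne
  have hu : u (h j) ∈ K := by simpa [coeff_twistedPoly_of_lt ht (h j).isLt] using hK (h j)
  have hηu : η j * u (h j) ∈ K := by
    simpa only [coeff_twistedPoly_twist ht htinj] using hK (k - 1 + t j)
  have := K.mul_mem hηu (K.inv_mem hu)
  exact hηK (by rwa [mul_inv_cancel_right₀ hne] at this)

end Twisted

theorem twistedPolySet_coeffs_in_subfield_eq_span_general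
    {F : Type*} [Field F] {n k ℓ : ℕ}
    (t : Fin ℓ → ℕ) (htinj : Function.Injective t)
    (htr : ∀ j, 1 ≤ t j ∧ t j ≤ n - k)
    (h : Fin ℓ → Fin k)
    (η : Fin ℓ → F)
    (K : Subfield F) (hηK : ∀ j, η j ∉ K) :
    { p ∈ twistedPolySet F k ℓ t h η | ∀ m, p.coeff m ∈ K }
      = (Submodule.span K { q : F[X] |
          ∃ i ∈ Finset.range k \ Finset.image (fun j => ((h j : ℕ))) Finset.univ,
            q = Polynomial.X ^ i } : Submodule K F[X]) := by
  have ht j : 1 ≤ t j := (htr j).1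
  ext p
  rw [Set.mem_sep_iff, SetLike.mem_coe, mem_span_X_pow_iff K]
  constructor
  · rintro ⟨⟨u, rfl⟩, hK⟩
    have hu j : u (h j) = 0 := twistedPoly_hook_eq_zero_of_coeff_mem ht htinj hK (hηK j)
    refine ⟨hK, fun m hm => ?_⟩
    rw [twistedPoly_of_hooks_eq_zero hu, coeff_sum_fin_C_mul_X_pow]
    split_ifs with hmk
    · obtain ⟨j, -, hj⟩ : ∃ j ∈ Finset.univ, (h j : ℕ) = m := by simpa [hmk] using hm
      subst hj
      exact hu j
    · rfl
  · rintro ⟨hK, hS⟩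
    refine ⟨⟨fun i => p.coeff i, ?_⟩, hK⟩
    rw [twistedPoly_of_hooks_eq_zero fun j => hS _ (by simp)]
    ext m
    rw [coeff_sum_fin_C_mul_X_pow]
    split_ifs with hmk
    · rfl
    · exact hS m (by simp [hmk])

/-- if η_j ∉ K for all j, then the set of polynomials in P_{k,n}[t,h,η]
all of whose coefficients lie in K equals span_K{ X^i : i ∈ I },
where I = {0,…,k−1} ∖ {h_1,…,h_ℓ}. -/
theorem twistedPolySet_coeffs_in_subfield_eq_span
    {F : Type*} [Field F] {n k ℓ : ℕ}
    (hk : 1 ≤ k) (hkn : k ≤ n) (hℓ : 1 ≤ ℓ)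
    (t : Fin ℓ → ℕ) (htinj : Function.Injective t)
    (htr : ∀ j, 1 ≤ t j ∧ t j ≤ n - k)
    (h : Fin ℓ → Fin k) (hhinj : Function.Injective h)
    (η : Fin ℓ → F) (hη : ∀ j, η j ≠ 0)
    (K : Subfield F) (hηK : ∀ j, η j ∉ K) :
    { p ∈ twistedPolySet F k ℓ t h η | ∀ m, p.coeff m ∈ K }
      = (Submodule.span K { q : F[X] |
          ∃ i ∈ Finset.range k \ Finset.image (fun j => ((h j : ℕ))) Finset.univ,
            q = Polynomial.X ^ i } : Submodule K F[X]) :=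
  twistedPolySet_coeffs_in_subfield_eq_span_general t htinj htr h η K hηK
end

section
/- Let α ∈ F^n have pairwise distinct entries. Then the twisted Reed–Solomon code TRS_{k,n}[α,t,h,η] has F-dimension exactly k. -/
open Polynomial

/-! The encoding `u ↦ ev_α(twistedPoly u)` is linear, and its image spans the code, so it suffices
that it is injective. Since every twist is `≥ 1`, the extra monomials have degree `≥ k` and the first
`k` coefficients of the twisted polynomial are `u`; since every twist is `≤ n - k`, its degree is
`< n`, so it is determined by its values at the `n` distinct points `α i`. -/

section TwistedPoly

variable {F : Type*} [Field F] {k ℓ : ℕ} (t : Fin ℓ → ℕ) (h : Fin ℓ → Fin k) (η : Fin ℓ → F)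

noncomputable def twistedPolyₗ : (Fin k → F) →ₗ[F] F[X] where
  toFun := twistedPoly k ℓ t h η
  map_add' u v := by
    simp only [twistedPoly, Pi.add_apply, mul_add, C_add, add_mul, Finset.sum_add_distrib]
    ring
  map_smul' c u := by
    simp only [twistedPoly, Pi.smul_apply, smul_eq_mul, RingHom.id_apply, C_mul, smul_add,
      smul_eq_C_mul, Finset.mul_sum]
    congr 1 <;> exact Finset.sum_congr rfl fun _ _ => by ring

variable {t}

theorem coeff_twistedPoly (ht : ∀ j, 1 ≤ t j) (u : Fin k → F) (i : Fin k) :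
    (twistedPoly k ℓ t h η u).coeff i = u i := by
  classical
  have hi_ne : ∀ j, (i : ℕ) ≠ k - 1 + t j := fun j => by have := ht j; omega
  simp only [twistedPoly, coeff_add, finsetSum_coeff, coeff_C_mul, coeff_X_pow, Fin.val_inj,
    hi_ne, if_false, mul_zero, Finset.sum_const_zero, add_zero, mul_ite, mul_one,
    Finset.sum_ite_eq, Finset.mem_univ, if_true]

theorem twistedPoly_injective (ht : ∀ j, 1 ≤ t j) :
    Function.Injective (twistedPoly k ℓ t h η) := fun u v huv => funext fun i => by
  rw [← coeff_twistedPoly h η ht u i, huv, coeff_twistedPoly h η ht v i]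

theorem degree_twistedPoly_lt {N : ℕ} (hkN : k ≤ N) (ht : ∀ j, k - 1 + t j < N)
    (u : Fin k → F) : (twistedPoly k ℓ t h η u).degree < N := by
  have hmonomial {m : ℕ} (hm : m < N) (a : F) : C a * X ^ m ∈ degreeLT F N :=
    mem_degreeLT.2 ((degree_C_mul_X_pow_le m a).trans_lt (by exact_mod_cast hm))
  exact mem_degreeLT.1 <| add_mem
    (Submodule.sum_mem _ fun i _ => hmonomial (i.2.trans_le hkN) _)
    (Submodule.sum_mem _ fun j _ => hmonomial (ht j) _)

end TwistedPoly

theorem eq_of_evalVec_eq {F : Type*} [Field F] {n : ℕ} {α : Fin n → F}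
    (hα : Function.Injective α) {f g : F[X]} (hf : f.degree < n) (hg : g.degree < n)
    (hfg : evalVec α f = evalVec α g) : f = g :=
  eq_of_degrees_lt_of_eval_index_eq Finset.univ hα.injOn (by simpa using hf)
    (by simpa using hg) fun i _ => congrFun hfg i

section Encoding

variable {F : Type*} [Field F] {n k ℓ : ℕ} (α : Fin n → F) (t : Fin ℓ → ℕ) (h : Fin ℓ → Fin k)
  (η : Fin ℓ → F)

noncomputable def trsEncode : (Fin k → F) →ₗ[F] (Fin n → F) :=
  LinearMap.pi (fun i => leval (α i)) ∘ₗ twistedPolyₗ t h η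

theorem TRS_eq_range_trsEncode : TRS α k ℓ t h η = LinearMap.range (trsEncode α t h η) := by
  ext c
  exact exists_congr fun u => eq_comm

variable {α t}

theorem trsEncode_injective (hα : Function.Injective α) (hkn : k ≤ n)
    (ht_pos : ∀ j, 1 ≤ t j) (ht_lt : ∀ j, k - 1 + t j < n) :
    Function.Injective (trsEncode α t h η) := fun u v huv =>
  twistedPoly_injective h η ht_pos <| eq_of_evalVec_eq hα
    (degree_twistedPoly_lt h η hkn ht_lt u) (degree_twistedPoly_lt h η hkn ht_lt v) huv

end Encoding

theorem TRS_finrank_general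
    {F : Type*} [Field F] {n k ℓ : ℕ}
    (hk : 1 ≤ k) (hkn : k ≤ n)
    (t : Fin ℓ → ℕ)
    (htr : ∀ j, 1 ≤ t j ∧ t j ≤ n - k)
    (h : Fin ℓ → Fin k)
    (η : Fin ℓ → F)
    (α : Fin n → F) (hα : Function.Injective α) :
    Module.finrank F (Submodule.span F (TRS α k ℓ t h η)) = k := by
  have ht_lt : ∀ j, k - 1 + t j < n := fun j => by have := htr j; omega
  have hinj := trsEncode_injective h η hα hkn (fun j => (htr j).1) ht_lt
  rw [TRS_eq_range_trsEncode, Submodule.span_eq, LinearMap.finrank_range_of_inj hinj,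
    Module.finrank_fin_fun]

/-- for α with pairwise distinct entries, the twisted Reed–Solomon code
TRS_{k,n}[α,t,h,η] has F-dimension exactly k. -/
theorem TRS_finrank
    {F : Type*} [Field F] {n k ℓ : ℕ}
    (hk : 1 ≤ k) (hkn : k ≤ n) (hℓ : 1 ≤ ℓ)
    (t : Fin ℓ → ℕ) (htinj : Function.Injective t)
    (htr : ∀ j, 1 ≤ t j ∧ t j ≤ n - k)
    (h : Fin ℓ → Fin k) (hhinj : Function.Injective h)
    (η : Fin ℓ → F) (hη : ∀ j, η j ≠ 0)
    (α : Fin n → F) (hα : Function.Injective α) :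
    Module.finrank F (Submodule.span F (TRS α k ℓ t h η)) = k :=
  TRS_finrank_general hk hkn t htr h η α hα
end
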